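/- Let 𝔸_V=(A,V,ψ,σ) be a quadruple satisfying the twisted condition. Then: (a) (μ_A⊗V)∘(A⊗σ)∘(ψ⊗V)∘(V⊗∇_{A⊗V})=∇_{A⊗V}∘(μ_A⊗V)∘(A⊗σ)∘(ψ⊗V); (b) ∇_{A⊗V}∘(μ_A⊗V)∘(A⊗σ)∘(∇_{A⊗V}⊗V)=∇_{A⊗V}∘(μ_A⊗V)∘(A⊗σ). If moreover ∇_{A⊗V}∘σ=σ, then also (c) (μ_A⊗V)∘(A⊗σ)∘(ψ⊗V)∘(V⊗∇_{A⊗V})=(μ_A⊗V)∘(A⊗σ)∘(ψ⊗V) and (d) (μ_A⊗V)∘(A⊗σ)∘(∇_{A⊗V}⊗V)=(μ_A⊗V)∘(A⊗σ). -/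

import Mathlib

open CategoryTheory MonoidalCategory

universe v u

namespace WeakCrossed

variable {C : Type u} [Category.{v} C] [MonoidalCategory C]

/-- The monoid axioms for a triple `(A, η, μ)` in a monoidal category. -/
def IsMon (A : C) (eta : 𝟙_ C ⟶ A) (mu : A ⊗ A ⟶ A) : Prop :=
  (eta ▷ A) ≫ mu = (λ_ A).hom ∧ (A ◁ eta) ≫ mu = (ρ_ A).hom ∧
    (mu ▷ A) ≫ mu = (α_ A A A).hom ≫ (A ◁ mu) ≫ mu

/-- The morphism `(μ_A ⊗ Y) ∘ (A ⊗ f) : (A ⊗ X) ⊗ Z ⟶ A ⊗ Y` for `f : X ⊗ Z ⟶ A ⊗ Y`. -/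
def phi (A : C) {X Z Y : C} (mu : A ⊗ A ⟶ A) (f : X ⊗ Z ⟶ A ⊗ Y) :
    (A ⊗ X) ⊗ Z ⟶ A ⊗ Y :=
  (α_ A X Z).hom ≫ (A ◁ f) ≫ (α_ A A Y).inv ≫ (mu ▷ Y)

/-- The measuring condition `(μ_A ⊗ V) ∘ (A ⊗ ψ) ∘ (ψ ⊗ A) = ψ ∘ (V ⊗ μ_A)`. -/
def Measuring (A V : C) (mu : A ⊗ A ⟶ A) (psi : V ⊗ A ⟶ A ⊗ V) : Prop :=
  (psi ▷ A) ≫ phi A mu psi = (α_ V A A).hom ≫ (V ◁ mu) ≫ psi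

/-- The idempotent `∇_{A⊗V} = (μ_A ⊗ V) ∘ (A ⊗ ψ) ∘ (A ⊗ V ⊗ η_A)`. -/
def nabla (A V : C) (eta : 𝟙_ C ⟶ A) (mu : A ⊗ A ⟶ A) (psi : V ⊗ A ⟶ A ⊗ V) :
    A ⊗ V ⟶ A ⊗ V :=
  (ρ_ (A ⊗ V)).inv ≫ ((A ⊗ V) ◁ eta) ≫ phi A mu psi

/-- The twisted condition
`(μ_A ⊗ V) ∘ (A ⊗ ψ) ∘ (σ ⊗ A) = (μ_A ⊗ V) ∘ (A ⊗ σ) ∘ (ψ ⊗ V) ∘ (V ⊗ ψ)`. -/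
def Twisted (A V : C) (mu : A ⊗ A ⟶ A) (psi : V ⊗ A ⟶ A ⊗ V)
    (sig : V ⊗ V ⟶ A ⊗ V) : Prop :=
  (sig ▷ A) ≫ phi A mu psi =
    (α_ V V A).hom ≫ (V ◁ psi) ≫ (α_ V A V).inv ≫ (psi ▷ V) ≫ phi A mu sig

/-- The cocycle condition
`(μ_A ⊗ V) ∘ (A ⊗ σ) ∘ (σ ⊗ V) = (μ_A ⊗ V) ∘ (A ⊗ σ) ∘ (ψ ⊗ V) ∘ (V ⊗ σ)`. -/
def Cocycle (A V : C) (mu : A ⊗ A ⟶ A) (psi : V ⊗ A ⟶ A ⊗ V)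
    (sig : V ⊗ V ⟶ A ⊗ V) : Prop :=
  (sig ▷ V) ≫ phi A mu sig =
    (α_ V V V).hom ≫ (V ◁ sig) ≫ (α_ V A V).inv ≫ (psi ▷ V) ≫ phi A mu sig

/-- The weak crossed product multiplication
`μ_{A⊗V} = (μ_A ⊗ V) ∘ (μ_A ⊗ σ) ∘ (A ⊗ ψ ⊗ V)`. -/
def prodAV (A V : C) (mu : A ⊗ A ⟶ A) (psi : V ⊗ A ⟶ A ⊗ V)
    (sig : V ⊗ V ⟶ A ⊗ V) : (A ⊗ V) ⊗ (A ⊗ V) ⟶ A ⊗ V :=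
  (α_ A V (A ⊗ V)).hom ≫ (A ◁ ((α_ V A V).inv ≫ (psi ▷ V) ≫ (α_ A V V).hom)) ≫
    (α_ A A (V ⊗ V)).inv ≫ (mu ⊗ₘ sig) ≫ (α_ A A V).inv ≫ (mu ▷ V)

/-- The morphism `η_A ⊗ V : V ⟶ A ⊗ V`. -/
def etaT (A V : C) (eta : 𝟙_ C ⟶ A) : V ⟶ A ⊗ V := (λ_ V).inv ≫ (eta ▷ V)

/-- The morphism `β_ν = (μ_A ⊗ V) ∘ (A ⊗ ν) : A ⟶ A ⊗ V`. -/
def beta (A V : C) (mu : A ⊗ A ⟶ A) (nu : 𝟙_ C ⟶ A ⊗ V) : A ⟶ A ⊗ V :=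
  (ρ_ A).inv ≫ (A ◁ nu) ≫ (α_ A A V).inv ≫ (mu ▷ V)

/-- Preunit condition (pre1):
`(μ_A ⊗ V) ∘ (A ⊗ σ) ∘ (ψ ⊗ V) ∘ (V ⊗ ν) = ∇_{A⊗V} ∘ (η_A ⊗ V)`. -/
def Pre1 (A V : C) (eta : 𝟙_ C ⟶ A) (mu : A ⊗ A ⟶ A) (psi : V ⊗ A ⟶ A ⊗ V)
    (sig : V ⊗ V ⟶ A ⊗ V) (nu : 𝟙_ C ⟶ A ⊗ V) : Prop :=
  (ρ_ V).inv ≫ (V ◁ nu) ≫ (α_ V A V).inv ≫ (psi ▷ V) ≫ phi A mu sig =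
    etaT A V eta ≫ nabla A V eta mu psi

/-- Preunit condition (pre2):
`(μ_A ⊗ V) ∘ (A ⊗ σ) ∘ (ν ⊗ V) = ∇_{A⊗V} ∘ (η_A ⊗ V)`. -/
def Pre2 (A V : C) (eta : 𝟙_ C ⟶ A) (mu : A ⊗ A ⟶ A) (psi : V ⊗ A ⟶ A ⊗ V)
    (sig : V ⊗ V ⟶ A ⊗ V) (nu : 𝟙_ C ⟶ A ⊗ V) : Prop :=
  (λ_ V).inv ≫ (nu ▷ V) ≫ phi A mu sig = etaT A V eta ≫ nabla A V eta mu psi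

/-- Preunit condition (pre3): `(μ_A ⊗ V) ∘ (A ⊗ ψ) ∘ (ν ⊗ A) = β_ν`. -/
def Pre3 (A V : C) (mu : A ⊗ A ⟶ A) (psi : V ⊗ A ⟶ A ⊗ V)
    (nu : 𝟙_ C ⟶ A ⊗ V) : Prop :=
  (λ_ A).inv ≫ (nu ▷ A) ≫ phi A mu psi = beta A V mu nu

/-- `(A ⊗ V, μ_{A⊗V})` is a weak crossed product: measuring, twisted and cocycle
conditions hold and `∇_{A⊗V} ∘ σ = σ`. -/
def WCP (A V : C) (eta : 𝟙_ C ⟶ A) (mu : A ⊗ A ⟶ A) (psi : V ⊗ A ⟶ A ⊗ V)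
    (sig : V ⊗ V ⟶ A ⊗ V) : Prop :=
  Measuring A V mu psi ∧ Twisted A V mu psi sig ∧ Cocycle A V mu psi sig ∧
    sig ≫ nabla A V eta mu psi = sig

/-- `(A ⊗ V, μ_{A⊗V})` is a weak crossed product with preunit `ν`. -/
def WCPpre (A V : C) (eta : 𝟙_ C ⟶ A) (mu : A ⊗ A ⟶ A) (psi : V ⊗ A ⟶ A ⊗ V)
    (sig : V ⊗ V ⟶ A ⊗ V) (nu : 𝟙_ C ⟶ A ⊗ V) : Prop :=
  WCP A V eta mu psi sig ∧ Pre1 A V eta mu psi sig nu ∧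
    Pre2 A V eta mu psi sig nu ∧ Pre3 A V mu psi nu

/-- `(μ_A ⊗ Y) ∘ (A ⊗ γ) : A ⊗ X ⟶ A ⊗ Y` for `γ : X ⟶ A ⊗ Y`. -/
def tmap (A : C) {X Y : C} (mu : A ⊗ A ⟶ A) (g : X ⟶ A ⊗ Y) : A ⊗ X ⟶ A ⊗ Y :=
  (A ◁ g) ≫ (α_ A A Y).inv ≫ (mu ▷ Y)

/-- Left `A`-linearity of `T : A ⊗ X ⟶ A ⊗ Y`:
`T ∘ (μ_A ⊗ X) = (μ_A ⊗ Y) ∘ (A ⊗ T)`. -/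
def LeftLin (A : C) {X Y : C} (mu : A ⊗ A ⟶ A) (T : A ⊗ X ⟶ A ⊗ Y) : Prop :=
  (mu ▷ X) ≫ T = (α_ A A X).hom ≫ (A ◁ T) ≫ (α_ A A Y).inv ≫ (mu ▷ Y)

/-- `ν` is a preunit for the associative product `m` on `X`. -/
def IsPreunit {X : C} (m : X ⊗ X ⟶ X) (nu : 𝟙_ C ⟶ X) : Prop :=
  (ρ_ X).inv ≫ (X ◁ nu) ≫ m = (λ_ X).inv ≫ (nu ▷ X) ≫ m ∧
  (ρ_ X).inv ≫ (X ◁ nu) ≫ m =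
    (ρ_ X).inv ≫ (X ◁ ((λ_ (𝟙_ C)).inv ≫ (nu ⊗ₘ nu) ≫ m)) ≫ m

/-- Brzeziński normalization conditions: `ψ ∘ (η_V ⊗ A) = A ⊗ η_V`,
`ψ ∘ (V ⊗ η_A) = η_A ⊗ V`, `σ ∘ (η_V ⊗ V) = σ ∘ (V ⊗ η_V) = η_A ⊗ V`. -/
def BrzNorm (A V : C) (eta : 𝟙_ C ⟶ A) (etaV : 𝟙_ C ⟶ V) (psi : V ⊗ A ⟶ A ⊗ V)
    (sig : V ⊗ V ⟶ A ⊗ V) : Prop :=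
  (λ_ A).inv ≫ (etaV ▷ A) ≫ psi = (ρ_ A).inv ≫ (A ◁ etaV) ∧
  (ρ_ V).inv ≫ (V ◁ eta) ≫ psi = (λ_ V).inv ≫ (eta ▷ V) ∧
  (λ_ V).inv ≫ (etaV ▷ V) ≫ sig = (λ_ V).inv ≫ (eta ▷ V) ∧
  (ρ_ V).inv ≫ (V ◁ etaV) ≫ sig = (λ_ V).inv ≫ (eta ▷ V)

/-! Write `T_γ = (μ_A ⊗ Y) ∘ (A ⊗ γ)` for the left `A`-linear extension of `γ : X ⟶ A ⊗ Y`
(`tmap`). Associativity of `μ_A` makes `γ ↦ T_γ` multiplicative, `∇_{A⊗V} = T_{ψ ∘ (V ⊗ η_A)}`,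
and the measuring condition says that `ψ` intertwines `V ⊗ T_γ` with `T` of `γ` moved past `ψ`.
Precomposing the twisted condition with `V ⊗ V ⊗ η_A` gives
`(μ_A ⊗ V) ∘ (A ⊗ σ) ∘ (ψ ⊗ V) ∘ (V ⊗ ψ ∘ (V ⊗ η_A)) = ∇_{A⊗V} ∘ σ`; combined with the measuring
condition this yields (a), and (b) follows from (a) and the left unit law by inserting
`η_A ⊗ V`. Under `∇_{A⊗V} ∘ σ = σ`, (c) and (d) are (a) and (b) with `∇_{A⊗V}` absorbed. -/

section Lemmas

variable {A V : C} {eta : 𝟙_ C ⟶ A} {mu : A ⊗ A ⟶ A} {psi : V ⊗ A ⟶ A ⊗ V}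

def psiEta (A V : C) (eta : 𝟙_ C ⟶ A) (psi : V ⊗ A ⟶ A ⊗ V) : V ⟶ A ⊗ V :=
  (ρ_ V).inv ≫ (V ◁ eta) ≫ psi

/-- `(μ_A ⊗ W) ∘ (A ⊗ h) ∘ (ψ ⊗ Y)`, the shape in which `σ` enters the statement. -/
def phiPsi (A : C) {V Y W : C} (mu : A ⊗ A ⟶ A) (psi : V ⊗ A ⟶ A ⊗ V)
    (h : V ⊗ Y ⟶ A ⊗ W) : V ⊗ (A ⊗ Y) ⟶ A ⊗ W :=
  (α_ V A Y).inv ≫ (psi ▷ Y) ≫ phi A mu h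

lemma phi_eq_assoc_tmap {X Z Y : C} (f : X ⊗ Z ⟶ A ⊗ Y) :
    phi A mu f = (α_ A X Z).hom ≫ tmap A mu f := rfl

lemma nabla_eq_tmap_psiEta : nabla A V eta mu psi = tmap A mu (psiEta A V eta psi) := by
  simp only [nabla, phi, tmap, psiEta]; monoidal

lemma etaT_comp_tmap (hunit : (eta ▷ A) ≫ mu = (λ_ A).hom) {X Y : C} (g : X ⟶ A ⊗ Y) :
    etaT A X eta ≫ tmap A mu g = g := by
  simp only [etaT, tmap]
  slice_lhs 2 3 => rw [← whisker_exchange]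
  trans g ≫ (λ_ (A ⊗ Y)).inv ≫ (α_ (𝟙_ C) A Y).inv ≫ (((eta ▷ A) ≫ mu) ▷ Y)
  · monoidal
  rw [hunit]
  monoidal

lemma tmap_comp_tmap (hassoc : (mu ▷ A) ≫ mu = (α_ A A A).hom ≫ (A ◁ mu) ≫ mu)
    {X Y Z : C} (g : X ⟶ A ⊗ Y) (h : Y ⟶ A ⊗ Z) :
    tmap A mu g ≫ tmap A mu h = tmap A mu (g ≫ tmap A mu h) := by
  simp only [tmap]
  slice_lhs 3 4 => rw [← whisker_exchange]
  trans (A ◁ g) ≫ (α_ A A Y).inv ≫ ((A ⊗ A) ◁ h) ≫ (α_ (A ⊗ A) A Z).inv ≫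
      (((mu ▷ A) ≫ mu) ▷ Z)
  · monoidal
  rw [hassoc]
  monoidal

lemma phi_comp_tmap (hassoc : (mu ▷ A) ≫ mu = (α_ A A A).hom ≫ (A ◁ mu) ≫ mu)
    {X Z Y W : C} (f : X ⊗ Z ⟶ A ⊗ Y) (g : Y ⟶ A ⊗ W) :
    phi A mu f ≫ tmap A mu g = phi A mu (f ≫ tmap A mu g) := by
  simp only [phi_eq_assoc_tmap, Category.assoc, tmap_comp_tmap hassoc]

lemma phiPsi_comp_tmap (hassoc : (mu ▷ A) ≫ mu = (α_ A A A).hom ≫ (A ◁ mu) ≫ mu)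
    {Y W W' : C} (h : V ⊗ Y ⟶ A ⊗ W) (g : W ⟶ A ⊗ W') :
    phiPsi A mu psi h ≫ tmap A mu g = phiPsi A mu psi (h ≫ tmap A mu g) := by
  simp only [phiPsi, Category.assoc, phi_comp_tmap hassoc]

lemma whiskerRight_tmap_phi (hassoc : (mu ▷ A) ≫ mu = (α_ A A A).hom ≫ (A ◁ mu) ≫ mu)
    {X Y Z W : C} (g : X ⟶ A ⊗ Y) (h : Y ⊗ Z ⟶ A ⊗ W) :
    (tmap A mu g ▷ Z) ≫ phi A mu h = phi A mu ((g ▷ Z) ≫ phi A mu h) := by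
  have hcoh : (tmap A mu g ▷ Z) ≫ (α_ A Y Z).hom =
      (α_ A X Z).hom ≫ tmap A mu ((g ▷ Z) ≫ (α_ A Y Z).hom) := by
    simp only [tmap]; monoidal
  rw [phi_eq_assoc_tmap, reassoc_of% hcoh, tmap_comp_tmap hassoc, phi_eq_assoc_tmap,
    Category.assoc]

lemma Measuring.whiskerLeft_mu_comp (hpsi : Measuring A V mu psi) :
    (V ◁ mu) ≫ psi = phiPsi A mu psi psi := by
  unfold Measuring at hpsi
  rw [phiPsi, hpsi, Iso.inv_hom_id_assoc]

lemma Measuring.whiskerLeft_tmap_phiPsi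
    (hassoc : (mu ▷ A) ≫ mu = (α_ A A A).hom ≫ (A ◁ mu) ≫ mu) (hpsi : Measuring A V mu psi)
    {X Y W : C} (g : X ⟶ A ⊗ Y) (h : V ⊗ Y ⟶ A ⊗ W) :
    (V ◁ tmap A mu g) ≫ phiPsi A mu psi h =
      phiPsi A mu psi ((V ◁ g) ≫ phiPsi A mu psi h) := by
  calc (V ◁ tmap A mu g) ≫ phiPsi A mu psi h
      = (V ◁ A ◁ g) ≫ (V ◁ (α_ A A Y).inv) ≫ (α_ V (A ⊗ A) Y).inv ≫
          (((V ◁ mu) ≫ psi) ▷ Y) ≫ phi A mu h := by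
        simp only [tmap, phiPsi]; monoidal
    _ = (V ◁ A ◁ g) ≫ (V ◁ (α_ A A Y).inv) ≫ (α_ V (A ⊗ A) Y).inv ≫
          ((α_ V A A).inv ▷ Y) ≫ ((psi ▷ A) ▷ Y) ≫ ((α_ A V A).hom ▷ Y) ≫
          phi A mu ((psi ▷ Y) ≫ phi A mu h) := by
        rw [hpsi.whiskerLeft_mu_comp, ← whiskerRight_tmap_phi hassoc]
        simp only [phiPsi, phi_eq_assoc_tmap]; monoidal
    _ = (α_ V A X).inv ≫ (((V ⊗ A) ◁ g) ≫ (psi ▷ (A ⊗ Y))) ≫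
          (α_ A V (A ⊗ Y)).hom ≫ tmap A mu (phiPsi A mu psi h) := by
        simp only [phi, phiPsi, tmap]; monoidal
    _ = phiPsi A mu psi ((V ◁ g) ≫ phiPsi A mu psi h) := by
        rw [whisker_exchange]; simp only [phiPsi, phi, tmap]; monoidal

lemma whiskerRight_psiEta_phi {Y W : C} (h : V ⊗ Y ⟶ A ⊗ W) :
    (psiEta A V eta psi ▷ Y) ≫ phi A mu h = (V ◁ etaT A Y eta) ≫ phiPsi A mu psi h := by
  simp only [psiEta, etaT, phiPsi, phi]; monoidal

lemma Twisted.whiskerLeft_psiEta_phiPsi {sig : V ⊗ V ⟶ A ⊗ V} (htw : Twisted A V mu psi sig) :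
    (V ◁ psiEta A V eta psi) ≫ phiPsi A mu psi sig = sig ≫ tmap A mu (psiEta A V eta psi) := by
  unfold Twisted at htw
  calc (V ◁ psiEta A V eta psi) ≫ phiPsi A mu psi sig
      = (ρ_ (V ⊗ V)).inv ≫ ((V ⊗ V) ◁ eta) ≫ (α_ V V A).hom ≫ (V ◁ psi) ≫
          phiPsi A mu psi sig := by
        simp only [psiEta, phiPsi]; monoidal
    _ = (ρ_ (V ⊗ V)).inv ≫ ((V ⊗ V) ◁ eta) ≫ (sig ▷ A) ≫ phi A mu psi := by
        rw [htw, phiPsi]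
    _ = sig ≫ tmap A mu (psiEta A V eta psi) := by
        rw [whisker_exchange_assoc]; simp only [phi, tmap, psiEta]; monoidal

variable {sig : V ⊗ V ⟶ A ⊗ V}

lemma whiskerLeft_nabla_phiPsi (hassoc : (mu ▷ A) ≫ mu = (α_ A A A).hom ≫ (A ◁ mu) ≫ mu)
    (hpsi : Measuring A V mu psi) (htw : Twisted A V mu psi sig) :
    (V ◁ nabla A V eta mu psi) ≫ phiPsi A mu psi sig =
      phiPsi A mu psi sig ≫ nabla A V eta mu psi := by
  rw [nabla_eq_tmap_psiEta, hpsi.whiskerLeft_tmap_phiPsi hassoc, htw.whiskerLeft_psiEta_phiPsi,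
    phiPsi_comp_tmap hassoc]

lemma whiskerRight_nabla_phi_nabla (hA : IsMon A eta mu) (hpsi : Measuring A V mu psi)
    (htw : Twisted A V mu psi sig) :
    (nabla A V eta mu psi ▷ V) ≫ phi A mu sig ≫ nabla A V eta mu psi =
      phi A mu sig ≫ nabla A V eta mu psi := by
  have hunit : (psiEta A V eta psi ▷ V) ≫ phi A mu (sig ≫ nabla A V eta mu psi) =
      sig ≫ nabla A V eta mu psi := by
    calc (psiEta A V eta psi ▷ V) ≫ phi A mu (sig ≫ nabla A V eta mu psi)
        = (V ◁ etaT A V eta) ≫ phiPsi A mu psi sig ≫ nabla A V eta mu psi := by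
          rw [whiskerRight_psiEta_phi, nabla_eq_tmap_psiEta, phiPsi_comp_tmap hA.2.2]
      _ = (V ◁ (etaT A V eta ≫ nabla A V eta mu psi)) ≫ phiPsi A mu psi sig := by
          rw [← whiskerLeft_nabla_phiPsi hA.2.2 hpsi htw, whiskerLeft_comp_assoc]
      _ = sig ≫ nabla A V eta mu psi := by
          rw [nabla_eq_tmap_psiEta, etaT_comp_tmap hA.1, htw.whiskerLeft_psiEta_phiPsi]
  rw [nabla_eq_tmap_psiEta, phi_comp_tmap hA.2.2, whiskerRight_tmap_phi hA.2.2,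
    ← nabla_eq_tmap_psiEta, hunit]

end Lemmas

/-- consequences of the twisted condition. -/
theorem twisted_consequences (A V : C) (eta : 𝟙_ C ⟶ A) (mu : A ⊗ A ⟶ A)
    (hA : IsMon A eta mu) (psi : V ⊗ A ⟶ A ⊗ V) (hpsi : Measuring A V mu psi)
    (sig : V ⊗ V ⟶ A ⊗ V) (htw : Twisted A V mu psi sig) :
    ((V ◁ nabla A V eta mu psi) ≫ (α_ V A V).inv ≫ (psi ▷ V) ≫ phi A mu sig =
        (α_ V A V).inv ≫ (psi ▷ V) ≫ phi A mu sig ≫ nabla A V eta mu psi) ∧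
    ((nabla A V eta mu psi ▷ V) ≫ phi A mu sig ≫ nabla A V eta mu psi =
        phi A mu sig ≫ nabla A V eta mu psi) ∧
    (sig ≫ nabla A V eta mu psi = sig →
      ((V ◁ nabla A V eta mu psi) ≫ (α_ V A V).inv ≫ (psi ▷ V) ≫ phi A mu sig =
          (α_ V A V).inv ≫ (psi ▷ V) ≫ phi A mu sig) ∧
      ((nabla A V eta mu psi ▷ V) ≫ phi A mu sig = phi A mu sig)) := by
  have ha := whiskerLeft_nabla_phiPsi (eta := eta) hA.2.2 hpsi htw
  have hb := whiskerRight_nabla_phi_nabla hA hpsi htw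
  simp only [phiPsi, Category.assoc] at ha
  refine ⟨ha, hb, fun hsig => ?_⟩
  have hphi : phi A mu sig ≫ nabla A V eta mu psi = phi A mu sig := by
    rw [nabla_eq_tmap_psiEta, phi_comp_tmap hA.2.2, ← nabla_eq_tmap_psiEta, hsig]
  rw [hphi] at ha hb
  exact ⟨ha, hb⟩

end WeakCrossed
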